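/- arXiv:math/0309003 — 4 statements merged into one kernel-verified Lean document; each statement's English description precedes it below -/
import Mathlib

section
/- In the group $G_{n,d} = H \rtimes \mathbf{Z}/n$ (with $H = \mathbf{F}_q^d$ and the generator of $\mathbf{Z}/n$ acting by multiplication by a primitive $n$-th root of unity $\zeta$), every subgroup of order $n$ is cyclic and has a generator $\gamma$ satisfying $\gamma \sigma \gamma^{-1} = \zeta\sigma$ for all $\sigma \in H$. -/
/-- In `G_{n,d} = H ⋊ ℤ/n` (with `H = 𝔽_q^d` and the generator of `ℤ/n` acting by a
primitive `n`-th root of unity `ζ`), every subgroup of order `n` (torus part) is cyclic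
and has a generator `γ` with `γσγ⁻¹ = ζσ` for all `σ ∈ H`. -/
theorem stmt2 {p s q n d : ℕ} (hp : p.Prime) (hs : s ≠ 0) (hq : q = p ^ s)
    (hn : 1 ≤ n) [NeZero n] (hnq : n ∣ q - 1) (hnp : Nat.Coprime n p)
    {F : Type*} [Field F] [Fintype F] (hF : Fintype.card F = q)
    (ζ : Fˣ) (hζ : orderOf ζ = n)
    {G : Type*} [Group G] (e : G ≃ (Fin d → F) × ZMod n)
    (hmul : ∀ g h : G,
      e (g * h) = ((e g).1 + ((ζ : F) ^ ((e g).2.val)) • (e h).1, (e g).2 + (e h).2)) :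
    ∀ T : Subgroup G, Nat.card T = n →
      IsCyclic T ∧
      ∃ γ ∈ T, Subgroup.zpowers γ = T ∧
        ∀ σ : G, (e σ).2 = 0 →
          e (γ * σ * γ⁻¹) = ((ζ : F) • (e σ).1, 0) := by
  -- characteristic facts
  have hq0 : ((q : ℕ) : F) = 0 := by rw [← hF]; exact FiniteField.cast_card_eq_zero F
  have hp0 : (p : F) = 0 := by
    have h : ((p : F)) ^ s = 0 := by rw [← Nat.cast_pow, ← hq]; exact hq0
    exact pow_eq_zero_iff hs |>.mp h
  have hnF : (n : F) ≠ 0 := by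
    intro h
    have hdp : ringChar F ∣ p := ringChar.dvd hp0
    have hdn : ringChar F ∣ n := ringChar.dvd h
    have hne1 : ringChar F ≠ 1 := by
      intro h1
      haveI : CharP F 1 := h1 ▸ ringChar.charP F
      exact CharP.char_ne_one F 1 rfl
    have hrp : ringChar F = p := ((Nat.Prime.eq_one_or_self_of_dvd hp _ hdp).resolve_left hne1)
    have : p ∣ Nat.gcd n p := Nat.dvd_gcd (hrp ▸ hdn) dvd_rfl
    rw [hnp] at this
    exact hp.one_lt.ne' (Nat.eq_one_of_dvd_one this)
  have he1 : e (1 : G) = (0, 0) := by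
    have h := hmul 1 1
    rw [mul_one] at h
    have h2 : (e (1 : G)).2 = 0 := left_eq_add.mp (congrArg Prod.snd h)
    have h1 := congrArg Prod.fst h
    simp only [h2, ZMod.val_zero, pow_zero, one_smul] at h1
    exact Prod.ext (left_eq_add.mp h1) h2
  have hinv2 : ∀ g : G, (e g⁻¹).2 = -(e g).2 := by
    intro g
    have h := hmul g g⁻¹
    rw [mul_inv_cancel, he1] at h
    exact eq_neg_of_add_eq_zero_right (congrArg Prod.snd h).symm
  have hinv1 : ∀ g : G, (e g).1 + ((ζ : F) ^ ((e g).2.val)) • (e g⁻¹).1 = 0 := by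
    intro g
    have h := hmul g g⁻¹
    rw [mul_inv_cancel, he1] at h
    exact (congrArg Prod.fst h).symm
  have hpow : ∀ g : G, (e g).2 = 0 → ∀ k : ℕ, e (g ^ k) = (k • (e g).1, 0) := by
    intro g hg k
    induction k with
    | zero => simpa using he1
    | succ k ih =>
      rw [pow_succ, hmul, ih]
      simp [hg, succ_nsmul]
      ring
  intro T hT
  have hker : ∀ g ∈ T, (e g).2 = 0 → g = 1 := by
    intro g hg h0
    have hgn : g ^ n = 1 := by
      have h : (⟨g, hg⟩ : T) ^ n = 1 := by rw [← hT]; exact pow_card_eq_one'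
      simpa using congrArg (Subtype.val) h
    have h := hpow g h0 n
    rw [hgn, he1] at h
    have hv : (0 : Fin d → F) = n • (e g).1 := congrArg Prod.fst h
    have hv1 : (e g).1 = 0 := by
      funext i
      have h2 := congrFun hv.symm i
      rw [Pi.smul_apply, nsmul_eq_mul, Pi.zero_apply] at h2
      exact (mul_eq_zero.mp h2).resolve_left hnF
    apply e.injective
    rw [he1]
    exact Prod.ext hv1 h0
  haveI : Finite T := Nat.finite_of_card_ne_zero (by rw [hT]; exact NeZero.ne n)
  haveI : Fintype T := Fintype.ofFinite T
  set φ : T →* Multiplicative (ZMod n) :=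
    { toFun := fun t => Multiplicative.ofAdd (e (t : G)).2
      map_one' := by simp [he1]
      map_mul' := by intro a b; simp [hmul] } with hφ
  have hinj : Function.Injective φ := by
    intro a b hab
    have h2 : (e (a : G)).2 = (e (b : G)).2 := by simpa [hφ] using hab
    have h0 : (e ((a : G) * (b : G)⁻¹)).2 = 0 := by
      rw [hmul, hinv2, h2, add_neg_cancel]
    have := hker _ (mul_mem a.2 (inv_mem b.2)) h0
    have : (a : G) = (b : G) := by
      rw [mul_inv_eq_one] at this; exact this
    exact Subtype.ext this
  have hcard : Fintype.card T = Fintype.card (Multiplicative (ZMod n)) := by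
    rw [← Nat.card_eq_fintype_card, ← Nat.card_eq_fintype_card, hT]
    rw [Nat.card_congr Multiplicative.ofAdd.symm, Nat.card_zmod]
  have hbij : Function.Bijective φ :=
    (Fintype.bijective_iff_injective_and_card φ).mpr ⟨hinj, hcard⟩
  set ψ := MulEquiv.ofBijective φ hbij with hψ
  set γ0 : T := ψ.symm (Multiplicative.ofAdd 1) with hγ0
  have hγ2 : (e (γ0 : G)).2 = 1 := by
    have h := ψ.apply_symm_apply (Multiplicative.ofAdd (1 : ZMod n))
    rw [← hγ0] at h
    simpa [hψ, hφ, MulEquiv.ofBijective] using h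
  have horder : orderOf ((γ0 : G)) = n := by
    rw [Subgroup.orderOf_coe, hγ0, ψ.symm.orderOf_eq]
    simp [ZMod.addOrderOf_one]
  have hζ1 : (ζ : F) ^ ((1 : ZMod n).val) = (ζ : F) := by
    rcases eq_or_lt_of_le hn with h | h
    · have hζ' : ζ = 1 := orderOf_eq_one_iff.mp (by rw [hζ, ← h])
      simp [hζ']
    · haveI : Fact (1 < n) := ⟨h⟩
      rw [ZMod.val_one, pow_one]
  refine ⟨isCyclic_of_surjective ψ.symm ψ.symm.surjective, (γ0 : G), γ0.2, ?_, ?_⟩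
  · refine Subgroup.eq_of_le_of_card_ge (Subgroup.zpowers_le.mpr γ0.2) ?_
    rw [Nat.card_zpowers, horder, hT]
  · intro σ hσ
    have key : (e (γ0 : G)).1 + (ζ : F) • (e ((γ0 : G))⁻¹).1 = 0 := by
      have := hinv1 (γ0 : G)
      rwa [hγ2, hζ1] at this
    rw [hmul, hmul, hσ, hγ2, hinv2, hγ2, add_zero, hζ1]
    refine Prod.ext ?_ (by simp)
    show ((e (γ0 : G)).1 + (ζ : F) • (e σ).1) + (ζ : F) • (e ((γ0:G))⁻¹).1 = (ζ : F) • (e σ).1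
    rw [add_right_comm, key, zero_add]
end

section
/- Let $\mathfrak{R}_d = k[T_1,\ldots,T_d,T_d^{-1}]$ and $\mathfrak{R}_{(d-1,1)} = \mathfrak{R}_d[S]$ where the embedding is defined by $P^*(S) \circ P^*(T_1',\ldots,T_{d-1}') = P^*(T_1,\ldots,T_d)$ with $P^*(b_1,\ldots,b_m)(X) = X + b_1 X^q + \cdots + b_m X^{q^m}$. Then one has the identity of coefficients: $T_1 = S + T_1'$, $T_i = S(T_{i-1}')^q + T_i'$ for $2 \leq i \leq d-1$, and $T_d = S(T_{d-1}')^q$. Moreover $S$ satisfies the monic equation $S^{(q^d-1)/(q-1)} + \sum_{i=0}^{d-1} (-1)^{d-i} T_{d-i}^{q^i} S^{(q^i-1)/(q-1)} = 0$ over $\mathfrak{R}_d$. -/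
open Polynomial

/-- Composition of the `𝔽_q`-linear polynomials `P^*(S)(X) = X + SX^q` and
`P^*(T'₁,…,T'_{d-1})(X) = X + T'₁X^q + ⋯ + T'_{d-1}X^{q^{d-1}}` in characteristic `p`
(`q = p^s`): writing `P^*(S) ∘ P^*(T'₁,…,T'_{d-1}) = P^*(T₁,…,T_d)`, the coefficients
are `T₁ = S + T'₁`, `Tᵢ = S·(T'_{i-1})^q + T'ᵢ` for `2 ≤ i ≤ d-1`, and
`T_d = S·(T'_{d-1})^q`; moreover `S` satisfies the monic equation
`S^{(q^d-1)/(q-1)} + ∑_{i=0}^{d-1} (-1)^{d-i} T_{d-i}^{q^i} S^{(q^i-1)/(q-1)} = 0`. -/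
theorem stmt13 {p s q d : ℕ} (hp : p.Prime) (hs : s ≠ 0) (hq : q = p ^ s) (hd : 2 ≤ d)
    {R : Type*} [CommRing R] [CharP R p]
    (S : R) (T' : ℕ → R) (T : ℕ → R)
    (hT1 : T 1 = S + T' 1)
    (hTmid : ∀ i, 2 ≤ i → i ≤ d - 1 → T i = S * (T' (i - 1)) ^ q + T' i)
    (hTd : T d = S * (T' (d - 1)) ^ q) :
    ((X + C S * X ^ q).comp
        (X + ∑ i ∈ Finset.Icc 1 (d - 1), C (T' i) * X ^ q ^ i) =
      X + ∑ i ∈ Finset.Icc 1 d, C (T i) * X ^ q ^ i) ∧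
    (S ^ ((q ^ d - 1) / (q - 1)) +
        ∑ i ∈ Finset.range d,
          (-1 : R) ^ (d - i) * (T (d - i)) ^ q ^ i * S ^ ((q ^ i - 1) / (q - 1)) = 0) := by
  haveI := Fact.mk hp
  haveI : ExpChar R p := .prime hp
  have hq1 : 1 < q := by
    subst hq
    exact Nat.one_lt_pow hs hp.one_lt
  -- the extended coefficient sequence: U 0 = 1, U i = T' i for 1 ≤ i ≤ d-1, U d = 0
  set U : ℕ → R := fun i => if i = 0 then 1 else if d ≤ i then 0 else T' i with hUdef
  have hU0 : U 0 = 1 := by simp [hUdef]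
  have hUd : U d = 0 := by
    have h1 : ¬ d = 0 := by omega
    simp [hUdef, h1]
  have hUmid : ∀ i, 1 ≤ i → i ≤ d - 1 → U i = T' i := by
    intro i h1 h2
    have e1 : ¬ i = 0 := by omega
    have e2 : ¬ d ≤ i := by omega
    simp [hUdef, e1, e2]
  have hTU : ∀ i, 1 ≤ i → i ≤ d → T i = S * (U (i - 1)) ^ q + U i := by
    intro i h1 h2
    rcases eq_or_lt_of_le h1 with h | h
    · rw [← h]
      simp [hT1, hU0, hUmid 1 le_rfl (by omega)]
    · rcases eq_or_lt_of_le h2 with h' | h'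
      · subst h'
        rw [hTd, hUd, hUmid (i - 1) (by omega) le_rfl, add_zero]
      · rw [hTmid i (by omega) (by omega), hUmid i (by omega) (by omega),
          hUmid (i - 1) (by omega) (by omega)]
  -- geometric sum arithmetic in ℕ
  have hgeo : ∀ i : ℕ, (q ^ i - 1) / (q - 1) = ∑ j ∈ Finset.range i, q ^ j := by
    intro i
    have key : (q - 1) * ∑ j ∈ Finset.range i, q ^ j = q ^ i - 1 := by
      induction i with
      | zero => simp
      | succ n ih =>
        rw [Finset.sum_range_succ, Nat.mul_add, ih, pow_succ]
        have h1 : 1 ≤ q ^ n := Nat.one_le_pow _ _ (by omega)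
        have h2 : (q - 1) * q ^ n = q * q ^ n - q ^ n := by
          rw [Nat.sub_mul, one_mul]
        have h3 : q ^ n * q = q * q ^ n := mul_comm _ _
        have h4 : q ^ n ≤ q * q ^ n := Nat.le_mul_of_pos_left _ (by omega)
        omega
    rw [← key, Nat.mul_div_cancel_left _ (by omega)]
  have hNsucc : ∀ i, (q ^ (i + 1) - 1) / (q - 1) = (q ^ i - 1) / (q - 1) + q ^ i := by
    intro i
    rw [hgeo, hgeo, Finset.sum_range_succ]
  constructor
  · -- Part 1: the polynomial composition identity
    haveI : ExpChar R[X] p := .prime hp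
    have hfrob : ∀ A B : R[X], (A + B) ^ q = A ^ q + B ^ q := by
      intro A B; rw [hq]; exact add_pow_char_pow ..
    have hfrobs : ∀ f : ℕ → R[X], ∀ t : Finset ℕ, (∑ i ∈ t, f i) ^ q = ∑ i ∈ t, f i ^ q := by
      intro f t; rw [hq]; exact sum_pow_char_pow ..
    rw [add_comp, X_comp, mul_comp, C_comp, pow_comp, X_comp, hfrob, hfrobs]
    have hterm1 : ∀ i : ℕ, (C (T' i) * X ^ q ^ i : R[X]) ^ q
        = C (T' i ^ q) * X ^ q ^ (i + 1) := by
      intro i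
      rw [mul_pow, ← C_pow, ← pow_mul, ← pow_succ]
    -- RHS sum decomposition
    have hsum : ∑ i ∈ Finset.Icc 1 d, C (T i) * X ^ q ^ i
        = (∑ i ∈ Finset.Icc 1 (d - 1), C (T' i) * X ^ q ^ i) + C S * X ^ q
          + C S * ∑ i ∈ Finset.Icc 1 (d - 1), C (T' i ^ q) * X ^ q ^ (i + 1) := by
      have step : ∀ i ∈ Finset.Icc 1 d, C (T i) * X ^ q ^ i
          = C S * (C (U (i - 1) ^ q) * X ^ q ^ i) + C (U i) * X ^ q ^ i := by
        intro i hi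
        rw [Finset.mem_Icc] at hi
        rw [hTU i hi.1 hi.2, C_add, C_mul, add_mul, mul_assoc]
      rw [Finset.sum_congr rfl step, Finset.sum_add_distrib, ← Finset.mul_sum]
      have icc_range : ∀ (m : ℕ) (f : ℕ → R[X]),
          ∑ i ∈ Finset.Icc 1 m, f i = ∑ j ∈ Finset.range m, f (1 + j) := by
        intro m f
        rw [← Finset.Ico_add_one_right_eq_Icc, Finset.sum_Ico_eq_sum_range]
        simp
      rw [icc_range d, icc_range d, icc_range (d - 1), icc_range (d - 1)]
      have hd' : d = (d - 1) + 1 := by omega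
      -- first sum: peel off the first term
      have e1 : ∑ j ∈ Finset.range d, C (U (1 + j - 1) ^ q) * X ^ q ^ (1 + j)
          = (∑ j ∈ Finset.range (d - 1), C (T' (1 + j) ^ q) * X ^ q ^ (1 + j + 1)) + X ^ q := by
        rw [hd', Finset.sum_range_succ']
        congr 1
        · apply Finset.sum_congr rfl
          intro j hj
          rw [Finset.mem_range] at hj
          have e3 : 1 + (j + 1) - 1 = 1 + j := by omega
          have e4 : 1 + (j + 1) = 1 + j + 1 := by omega
          rw [e3, e4, hUmid (1 + j) (by omega) (by omega)]
        · simp [hU0]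
      -- second sum: peel off the last term
      have e2 : ∑ j ∈ Finset.range d, C (U (1 + j)) * X ^ q ^ (1 + j)
          = ∑ j ∈ Finset.range (d - 1), C (T' (1 + j)) * X ^ q ^ (1 + j) := by
        rw [hd', Finset.sum_range_succ]
        have : 1 + (d - 1) = d := by omega
        rw [this, hUd, map_zero, zero_mul, add_zero]
        apply Finset.sum_congr rfl
        intro j hj
        rw [Finset.mem_range] at hj
        rw [hUmid (1 + j) (by omega) (by omega)]
      rw [e1, e2]
      ring
    rw [hsum]
    have hterm1' : ∑ i ∈ Finset.Icc 1 (d - 1), (C (T' i) * X ^ q ^ i : R[X]) ^ q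
        = ∑ i ∈ Finset.Icc 1 (d - 1), C (T' i ^ q) * X ^ q ^ (i + 1) :=
      Finset.sum_congr rfl fun i _ => hterm1 i
    rw [hterm1']
    ring
  · -- Part 2: the monic equation for S
    set g : ℕ → R := fun i => (-1 : R) ^ (d - i) * (U (d - i)) ^ q ^ i * S ^ ((q ^ i - 1) / (q - 1))
      with hg
    have hterm : ∀ i ∈ Finset.range d,
        (-1 : R) ^ (d - i) * (T (d - i)) ^ q ^ i * S ^ ((q ^ i - 1) / (q - 1))
          = g i - g (i + 1) := by
      intro i hi
      rw [Finset.mem_range] at hi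
      rw [hTU (d - i) (by omega) (by omega)]
      have hpow : (S * U (d - i - 1) ^ q + U (d - i)) ^ q ^ i
          = S ^ q ^ i * (U (d - (i + 1))) ^ q ^ (i + 1) + (U (d - i)) ^ q ^ i := by
        have hidx : d - i - 1 = d - (i + 1) := by omega
        have e : (S * U (d - i - 1) ^ q + U (d - i)) ^ q ^ i
            = (S * U (d - i - 1) ^ q) ^ q ^ i + (U (d - i)) ^ q ^ i := by
          rw [hq, ← pow_mul]; exact add_pow_char_pow ..
        rw [e, hidx, mul_pow, ← pow_mul, ← pow_succ']
      rw [hpow]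
      have hsign : (-1 : R) ^ (d - i) = -(-1 : R) ^ (d - (i + 1)) := by
        have : d - i = (d - (i + 1)) + 1 := by omega
        rw [this, pow_succ]; ring
      have hS : S ^ ((q ^ (i + 1) - 1) / (q - 1))
          = S ^ q ^ i * S ^ ((q ^ i - 1) / (q - 1)) := by
        rw [hNsucc, pow_add]; ring
      rw [hg]
      simp only []
      rw [hsign, hS]
      ring
    rw [Finset.sum_congr rfl hterm, Finset.sum_range_sub' g d]
    have hg0 : g 0 = 0 := by
      simp [hg, hUd]
    have hgd : g d = S ^ ((q ^ d - 1) / (q - 1)) := by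
      simp [hg, hU0]
    rw [hg0, hgd]
    ring
end

section
/- Let $k$ be an algebraically closed field of characteristic $p>0$, $A$ a complete discrete valuation ring over $k$ with residue field $k$, and let $B/A$, $B'/A$ be two restrained Galois extensions of type $(n,d)$ in canonical form: $B = k[[x]]$, $B' = k[[x']]$ with $G = G_{n,d}$ acting by $\gamma(x) = \zeta x$, $\sigma(x) = x/(1 - \theta(\sigma)x)$ and $\gamma'(x') = \zeta x'$, $\sigma'(x') = x'/(1-\theta'(\sigma)x')$, where $\theta, \theta' : H \hookrightarrow k$ are $\mathbf{F}_q$-linear embeddings of the $p$-Sylow subgroup $H$. If $\theta(H) = c\,\theta'(H)$ for some $c \in k^\times$, then the two $G$-extensions are isomorphic: there exist a $k$-algebra isomorphism $\phi : B \to B'$ over $A$ and a group automorphism $h$ of $G$ with $\sigma' = \phi \circ h(\sigma) \circ \phi^{-1}$ for all $\sigma \in G$. -/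
open PowerSeries Pointwise

/-- The Möbius substitution `F(x) ↦ F(x/(1-ux))` on `k[[x]]`, coefficientwise
`coeff m = ∑_{j ≤ m} (coeff j F)·C(m-1, m-j)·u^{m-j}`. -/
noncomputable def mob {k : Type*} [Field k] (u : k) (F : PowerSeries k) : PowerSeries k :=
  PowerSeries.mk fun m =>
    ∑ j ∈ Finset.range (m + 1),
      (PowerSeries.coeff j F) * ((m - 1).choose (m - j) : k) * u ^ (m - j)

/- Conjugating the Möbius substitution `x ↦ x/(1 - ux)` by the dilation `x ↦ ax` turns it into
`x ↦ x/(1 - uax)`. Hence, after choosing `h` with `θ ∘ h = c · θ'`, the dilation by `c⁻¹`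
intertwines the two actions of `H`, and, like every dilation, it commutes with `γ : x ↦ ζx`. -/

theorem PowerSeries.rescaleAlgHom_apply {R : Type*} [CommRing R] (r : R) (f : R⟦X⟧) :
    rescaleAlgHom r f = rescale r f := by
  rw [← coe_rescaleAlgHom]
  rfl

noncomputable def PowerSeries.rescaleAlgEquiv {R : Type*} [CommRing R] (a : Rˣ) :
    R⟦X⟧ ≃ₐ[R] R⟦X⟧ :=
  AlgEquiv.ofAlgHom (rescaleAlgHom (a : R)) (rescaleAlgHom ((a⁻¹ : Rˣ) : R))
    (by ext f : 1; simp [rescaleAlgHom_apply, rescale_rescale])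
    (by ext f : 1; simp [rescaleAlgHom_apply, rescale_rescale])

theorem PowerSeries.rescaleAlgEquiv_apply {R : Type*} [CommRing R] (a : Rˣ) (f : R⟦X⟧) :
    rescaleAlgEquiv a f = rescale (a : R) f := by
  simp [rescaleAlgEquiv, rescaleAlgHom_apply]

theorem rescale_mob {k : Type*} [Field k] (a u : k) (G : k⟦X⟧) :
    rescale a (mob u G) = mob (u * a) (rescale a G) := by
  ext m
  simp only [mob, coeff_rescale, coeff_mk, Finset.mul_sum]
  refine Finset.sum_congr rfl fun j hj => ?_
  have hjm : j ≤ m := Nat.lt_succ_iff.mp (Finset.mem_range.mp hj)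
  rw [← Nat.add_sub_cancel' hjm, pow_add, Nat.add_sub_cancel_left, mul_pow]
  ring

theorem LinearMap.exists_linearEquiv_comp_eq_of_range_eq {R M N : Type*} [Semiring R]
    [AddCommMonoid M] [AddCommMonoid N] [Module R M] [Module R N] {f g : M →ₗ[R] N}
    (hf : Function.Injective f) (hg : Function.Injective g) (hfg : range f = range g) :
    ∃ e : M ≃ₗ[R] M, ∀ x, f (e x) = g x :=
  ⟨LinearEquiv.ofInjective g hg ≪≫ₗ LinearEquiv.ofEq _ _ hfg.symm ≪≫ₗ
      (LinearEquiv.ofInjective f hf).symm,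
    fun x => by simp⟩

theorem stmt14_general {d : ℕ}
    {F : Type*} [Field F]
    {k : Type*} [Field k] [Algebra F k]
    (ζ : k)
    (θ θ' : (Fin d → F) →ₗ[F] k)
    (hθ : Function.Injective θ) (hθ' : Function.Injective θ')
    (c : kˣ) (hc : Set.range ⇑θ = (c : k) • Set.range ⇑θ') :
    ∃ φ : PowerSeries k ≃ₐ[k] PowerSeries k,
      ∃ h : (Fin d → F) ≃ₗ[F] (Fin d → F),
        (∀ σ : Fin d → F, ∀ G : PowerSeries k,
          φ (mob (θ (h σ)) G) = mob (θ' σ) (φ G)) ∧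
        (∀ G : PowerSeries k,
          φ (PowerSeries.rescale ζ G) = PowerSeries.rescale ζ (φ G)) := by
  have hcθ' : Function.Injective ((c : k) • θ') := fun x y hxy =>
    hθ' (smul_right_injective k c.ne_zero hxy)
  have hrange : LinearMap.range θ = LinearMap.range ((c : k) • θ') :=
    SetLike.coe_injective <| by
      rw [LinearMap.coe_range, LinearMap.coe_range, hc, ← Set.range_smul]
      rfl
  obtain ⟨h, hh⟩ := LinearMap.exists_linearEquiv_comp_eq_of_range_eq hθ hcθ' hrange
  refine ⟨rescaleAlgEquiv c⁻¹, h, fun σ G => ?_, fun G => ?_⟩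
  · rw [rescaleAlgEquiv_apply, rescaleAlgEquiv_apply, hh, rescale_mob, LinearMap.smul_apply,
      smul_eq_mul, mul_right_comm, Units.mul_inv, one_mul]
  · simp only [rescaleAlgEquiv_apply, rescale_rescale, mul_comm]

/-- Two restrained Galois extensions of type `(n,d)` of a complete discrete valuation
ring in canonical form, `B = k[[x]]` and `B' = k[[x']]` with the `p`-Sylow subgroup
`H = 𝔽_q^d` acting through `𝔽_q`-linear embeddings `θ, θ' : H ↪ k` by
`σ : x ↦ x/(1-θ(σ)x)` and the torus generator by `γ : x ↦ ζx`: if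
`θ(H) = c·θ'(H)` for some `c ∈ k^×`, then the two `G`-extensions are isomorphic,
i.e. there are a `k`-algebra isomorphism `φ : B → B'` (over `A`) and an automorphism
`h` of `G = G_{n,d}` (an `𝔽_q`-linear automorphism of `H`, extended by `γ ↦ γ`) with
`σ' ∘ φ = φ ∘ h(σ)` for all `σ ∈ H` and `γ ∘ φ = φ ∘ γ`. -/
theorem stmt14 {p s q n d : ℕ} (hp : p.Prime) (hs : s ≠ 0) (hq : q = p ^ s)
    (hn : 1 ≤ n) (hnq : n ∣ q - 1) (hnp : Nat.Coprime n p) (hd : 1 ≤ d)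
    {F : Type*} [Field F] [Fintype F] (hF : Fintype.card F = q)
    {k : Type*} [Field k] [IsAlgClosed k] [CharP k p] [Algebra F k]
    (ζ : k) (hζ : IsPrimitiveRoot ζ n)
    (θ θ' : (Fin d → F) →ₗ[F] k)
    (hθ : Function.Injective θ) (hθ' : Function.Injective θ')
    (c : kˣ) (hc : Set.range ⇑θ = (c : k) • Set.range ⇑θ') :
    ∃ φ : PowerSeries k ≃ₐ[k] PowerSeries k,
      ∃ h : (Fin d → F) ≃ₗ[F] (Fin d → F),
        (∀ σ : Fin d → F, ∀ G : PowerSeries k,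
          φ (mob (θ (h σ)) G) = mob (θ' σ) (φ G)) ∧
        (∀ G : PowerSeries k,
          φ (PowerSeries.rescale ζ G) = PowerSeries.rescale ζ (φ G)) :=
  stmt14_general ζ θ θ' hθ hθ' c hc
end

section
/- Let $R$ be a Noetherian integral domain and $t \in R$ a nonzero element such that $tR$ is a prime ideal and the localization $R[t^{-1}]$ is integrally closed in the fraction field of $R$. Then $R$ is integrally closed in its fraction field. -/
/-!
Let `x` in the fraction field be integral over `R`. Since `R[t⁻¹]` is integrally closed,
`tⁿ x ∈ R` for some `n`, and it suffices to remove one factor of `t` at a time: if `y` is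
integral over `R` and `t y = r ∈ R`, scaling the roots of a monic equation of `y` by `t` gives
a monic equation of `r` whose lower coefficients lie in `tR`, so `r ^ N ∈ tR`, hence `r ∈ tR`
by primality, and `y = r / t ∈ R`.
-/

section

variable {R A : Type*} [CommRing R] [IsDomain R] [CommRing A] [Nontrivial A] [Algebra R A]
  [Module.IsTorsionFree R A] {t : R}

theorem exists_algebraMap_eq_of_isIntegral_of_mul_eq (ht : t ≠ 0)
    (hprime : (Ideal.span {t}).IsPrime) {y : A} (hy : IsIntegral R y) {r : R}
    (hr : algebraMap R A t * y = algebraMap R A r) : ∃ s : R, algebraMap R A s = y := by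
  obtain ⟨p, hmonic, hp⟩ := hy
  have hpow : r ^ p.natDegree ∈ Ideal.span {t} :=
    Ideal.mem_span_singleton.mpr <|
      Polynomial.dvd_pow_natDegree_of_aeval_eq_zero hmonic t r y hp (by rw [mul_comm, hr])
  obtain ⟨s, rfl⟩ := Ideal.mem_span_singleton.mp (hprime.mem_of_pow_mem _ hpow)
  refine ⟨s, smul_right_injective A ht ?_⟩
  simp only [Algebra.smul_def, ← map_mul, hr]

theorem exists_algebraMap_eq_of_isIntegral_of_pow_mul_eq (ht : t ≠ 0)
    (hprime : (Ideal.span {t}).IsPrime) {x : A} (hx : IsIntegral R x) (n : ℕ) {r : R}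
    (hr : algebraMap R A t ^ n * x = algebraMap R A r) : ∃ s : R, algebraMap R A s = x := by
  induction n generalizing r with
  | zero => exact ⟨r, by simpa using hr.symm⟩
  | succ n ih =>
    have hy : IsIntegral R (algebraMap R A t ^ n * x) :=
      (isIntegral_algebraMap.pow n).mul hx
    obtain ⟨s, hs⟩ := exists_algebraMap_eq_of_isIntegral_of_mul_eq ht hprime hy
      (r := r) (by rw [← hr, pow_succ', mul_assoc])
    exact ih hs.symm

theorem IsIntegrallyClosed.of_isLocalization_away {S K : Type*} [CommRing S] [Algebra R S]
    [IsLocalization.Away t S] [IsIntegrallyClosed S] [Field K] [Algebra R K] [Algebra S K]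
    [IsScalarTower R S K] [IsFractionRing R K] (ht : t ≠ 0)
    (hprime : (Ideal.span {t}).IsPrime) : IsIntegrallyClosed R := by
  have : IsFractionRing S K :=
    IsFractionRing.isFractionRing_of_isDomain_of_isLocalization (Submonoid.powers t) S K
  refine (isIntegrallyClosed_iff K).mpr fun {x} hx ↦ ?_
  obtain ⟨a, rfl⟩ := IsIntegrallyClosed.isIntegral_iff.mp (hx.tower_top (A := S))
  obtain ⟨n, r, hr⟩ := IsLocalization.Away.surj t a
  refine exists_algebraMap_eq_of_isIntegral_of_pow_mul_eq ht hprime hx n (r := r) ?_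
  rw [IsScalarTower.algebraMap_apply R S K, IsScalarTower.algebraMap_apply R S K r, ← hr,
    map_mul, map_pow, mul_comm]

end

theorem stmt16_general {R : Type*} [CommRing R] [IsDomain R]
    (t : R) (ht : t ≠ 0) (hprime : (Ideal.span ({t} : Set R)).IsPrime)
    (hloc : IsIntegrallyClosed (Localization.Away t)) :
    IsIntegrallyClosed R := by
  have hle : Submonoid.powers t ≤ nonZeroDivisors R :=
    powers_le_nonZeroDivisors_of_noZeroDivisors ht
  let : Algebra (Localization.Away t) (FractionRing R) :=
    IsLocalization.localizationAlgebraOfSubmonoidLe _ _ _ _ hle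
  have : IsScalarTower R (Localization.Away t) (FractionRing R) :=
    IsLocalization.localization_isScalarTower_of_submonoid_le _ _ _ _ hle
  exact IsIntegrallyClosed.of_isLocalization_away (S := Localization.Away t)
    (K := FractionRing R) ht hprime

/-- If `R` is a Noetherian integral domain and `t ∈ R` is a nonzero element such that
`tR` is a prime ideal and the localization `R[t⁻¹]` is integrally closed (in the common
fraction field), then `R` is integrally closed in its fraction field. -/
theorem stmt16 {R : Type*} [CommRing R] [IsDomain R] [IsNoetherianRing R]
    (t : R) (ht : t ≠ 0) (hprime : (Ideal.span ({t} : Set R)).IsPrime)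
    (hloc : IsIntegrallyClosed (Localization.Away t)) :
    IsIntegrallyClosed R :=
  stmt16_general t ht hprime hloc
end
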